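/- arXiv:2306.16006 — 3 statements merged into one kernel-verified Lean document; each statement's English description precedes it below -/
import Mathlib

section
/- Monotonicity of the star-NE conditions in i: for fixed a, b, l > 0, s ≥ 0 with a/H_n^s ≤ l and b/H_n^s ≤ l and H_n^s ≤ 2, if the inequality b·(i/2)·(H_n^s − 1 − 1/2^s)/H_n^s + a·(H_{i+1}^s − 2)/H_n^s ≤ l·(i−1) holds for i = n−1, then it holds for all 2 ≤ i ≤ n−1. -/
/-! Both summands are bounded separately. As `b / H_n^s ≤ l` and `H_n^s - 1 - 2^{-s} ≤ 1`, the
first is at most `l · i / 2`, which is at most `l · (i - 1)` once `i ≥ 2`; as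
`H_{i+1}^s ≤ H_n^s ≤ 2`, the second is nonpositive. -/

/-- Generalized harmonic number `H_m^s = ∑_{k=1}^m 1/k^s`. -/
noncomputable def Hgen (s : ℝ) (m : ℕ) : ℝ := ∑ k ∈ Finset.Icc 1 m, (1 : ℝ) / (k : ℝ) ^ s

lemma Hgen_nonneg (s : ℝ) (m : ℕ) : 0 ≤ Hgen s m :=
  Finset.sum_nonneg fun _ _ => by positivity

lemma Hgen_monotone (s : ℝ) : Monotone (Hgen s) := fun _ _ h =>
  Finset.sum_le_sum_of_subset_of_nonneg (Finset.Icc_subset_Icc_right h) fun _ _ _ => by positivity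

theorem star_ne_condition_monotone_in_i_general (a b l s : ℝ) (n : ℕ)
    (ha : 0 < a) (hb : 0 < b) (hl : 0 < l)
    (hHb : b / Hgen s n ≤ l) (hH2 : Hgen s n ≤ 2) :
    ∀ i : ℕ, 2 ≤ i → i ≤ n - 1 →
      b * ((i : ℝ) / 2) * (Hgen s n - 1 - 1 / 2 ^ s) / Hgen s n +
        a * (Hgen s (i + 1) - 2) / Hgen s n ≤ l * ((i : ℝ) - 1) := by
  intro i hi2 hin
  set H := Hgen s n
  set C := H - 1 - 1 / 2 ^ s
  have hH : 0 ≤ H := Hgen_nonneg s n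
  have hC : C ≤ 1 := by
    have : (0 : ℝ) < 1 / 2 ^ s := by positivity
    linarith
  have hslope : b * C / H ≤ l := calc
    b * C / H = b / H * C := by ring
    _ ≤ b / H := mul_le_of_le_one_right (by positivity) hC
    _ ≤ l := hHb
  have hHi : Hgen s (i + 1) ≤ 2 := (Hgen_monotone s (by omega)).trans hH2
  have ha_term : a * (Hgen s (i + 1) - 2) / H ≤ 0 :=
    div_nonpos_of_nonpos_of_nonneg (mul_nonpos_of_nonneg_of_nonpos ha.le (by linarith)) hH
  have hi : (2 : ℝ) ≤ i := by exact_mod_cast hi2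
  calc b * ((i : ℝ) / 2) * C / H + a * (Hgen s (i + 1) - 2) / H
      = b * C / H * ((i : ℝ) / 2) + a * (Hgen s (i + 1) - 2) / H := by ring
    _ ≤ l * ((i : ℝ) / 2) + 0 := by gcongr
    _ ≤ l * ((i : ℝ) - 1) := by nlinarith

theorem star_ne_condition_monotone_in_i (a b l s : ℝ) (n : ℕ)
    (ha : 0 < a) (hb : 0 < b) (hl : 0 < l) (hs : 0 ≤ s) (hn : 2 ≤ n)
    (hHa : a / Hgen s n ≤ l) (hHb : b / Hgen s n ≤ l) (hH2 : Hgen s n ≤ 2)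
    (hlast : b * (((n : ℝ) - 1) / 2) * (Hgen s n - 1 - 1 / 2 ^ s) / Hgen s n +
        a * (Hgen s n - 2) / Hgen s n ≤ l * (((n : ℝ) - 1) - 1)) :
    ∀ i : ℕ, 2 ≤ i → i ≤ n - 1 →
      b * ((i : ℝ) / 2) * (Hgen s n - 1 - 1 / 2 ^ s) / Hgen s n +
        a * (Hgen s (i + 1) - 2) / Hgen s n ≤ l * ((i : ℝ) - 1) :=
  star_ne_condition_monotone_in_i_general a b l s n ha hb hl hHb hH2
end

section
/- Greedy achieves (1−1/e) for monotone submodular maximization under cardinality constraint: if f : Finset Ω → ℝ is monotone, submodular, and f(∅) = 0, and S_k is the set built by greedily adding, at each of k steps, an element maximizing the marginal gain, then f(S_k) ≥ (1 − (1 − 1/k)^k)·max_{|T|≤k} f(T) ≥ (1 − 1/e)·max_{|T|≤k} f(T). -/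
/-!
Let `#T ≤ k`. By monotonicity and submodularity, `f T - f S ≤ f (S ∪ T) - f S` is at most the
sum of the marginal gains of the elements of `T` over `S`, hence at most `k` times the largest
marginal gain, which is exactly what the greedy step adds. So each greedy step shrinks the gap
`f T - f Sᵢ` by a factor `1 - 1/k`, and after `k` steps the gap is at most
`(1 - 1/k)^k f T ≤ f T / e`.
-/

open Finset

section Submodular

variable {Ω : Type*} [DecidableEq Ω] {f : Finset Ω → ℝ}

theorem sub_le_sum_marginal_of_submodular
    (hsub : ∀ (A B : Finset Ω) (x : Ω), A ⊆ B → x ∉ B →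
      f (insert x B) - f B ≤ f (insert x A) - f A)
    (A B : Finset Ω) : f (A ∪ B) - f A ≤ ∑ x ∈ B, (f (insert x A) - f A) := by
  induction B using Finset.induction_on with
  | empty => simp
  | @insert x B hxB ih =>
    rw [sum_insert hxB, union_insert]
    by_cases hx : x ∈ A ∪ B
    · have hxA : x ∈ A := (mem_union.1 hx).resolve_right hxB
      rw [insert_eq_of_mem hx, insert_eq_of_mem hxA, sub_self, zero_add]
      exact ih
    · linarith [hsub A (A ∪ B) x subset_union_left hx]

theorem sub_le_card_mul_max_marginal
    (hmono : ∀ A B : Finset Ω, A ⊆ B → f A ≤ f B)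
    (hsub : ∀ (A B : Finset Ω) (x : Ω), A ⊆ B → x ∉ B →
      f (insert x B) - f B ≤ f (insert x A) - f A)
    {A : Finset Ω} {x : Ω} (hx : ∀ y, f (insert y A) - f A ≤ f (insert x A) - f A)
    (T : Finset Ω) : f T - f A ≤ #T * (f (insert x A) - f A) :=
  calc f T - f A ≤ f (A ∪ T) - f A := by linarith [hmono T (A ∪ T) subset_union_right]
    _ ≤ ∑ y ∈ T, (f (insert y A) - f A) := sub_le_sum_marginal_of_submodular hsub A T
    _ ≤ ∑ _y ∈ T, (f (insert x A) - f A) := sum_le_sum fun y _ => hx y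
    _ = #T * (f (insert x A) - f A) := by rw [sum_const, nsmul_eq_mul]

theorem greedy_gap_le_one_sub_inv_mul
    (hmono : ∀ A B : Finset Ω, A ⊆ B → f A ≤ f B)
    (hsub : ∀ (A B : Finset Ω) (x : Ω), A ⊆ B → x ∉ B →
      f (insert x B) - f B ≤ f (insert x A) - f A)
    {A : Finset Ω} {x : Ω} (hx : ∀ y, f (insert y A) - f A ≤ f (insert x A) - f A)
    {T : Finset Ω} {k : ℕ} (hk : 0 < k) (hT : #T ≤ k) :
    f T - f (insert x A) ≤ (1 - 1 / (k : ℝ)) * (f T - f A) := by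
  have hk' : (0 : ℝ) < k := by exact_mod_cast hk
  have hgain : 0 ≤ f (insert x A) - f A := sub_nonneg.2 (hmono _ _ (subset_insert x A))
  have hgap : f T - f A ≤ k * (f (insert x A) - f A) :=
    (sub_le_card_mul_max_marginal hmono hsub hx T).trans
      (mul_le_mul_of_nonneg_right (by exact_mod_cast hT) hgain)
  have hdiv : (f T - f A) / k ≤ f (insert x A) - f A := by rwa [div_le_iff₀' hk']
  calc f T - f (insert x A) = (f T - f A) - (f (insert x A) - f A) := by ring
    _ ≤ (f T - f A) - (f T - f A) / k := by linarith
    _ = (1 - 1 / (k : ℝ)) * (f T - f A) := by ring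

end Submodular

theorem greedy_submodular_approximation {Ω : Type*} [DecidableEq Ω]
    (f : Finset Ω → ℝ)
    (hmono : ∀ A B : Finset Ω, A ⊆ B → f A ≤ f B)
    (hsub : ∀ (A B : Finset Ω) (x : Ω), A ⊆ B → x ∉ B →
      f (insert x B) - f B ≤ f (insert x A) - f A)
    (hempty : f ∅ = 0)
    (k : ℕ) (hk : 1 ≤ k)
    (S : ℕ → Finset Ω) (hS0 : S 0 = ∅)
    (hgreedy : ∀ i, ∃ x, S (i + 1) = insert x (S i) ∧
      ∀ y, f (insert y (S i)) - f (S i) ≤ f (insert x (S i)) - f (S i)) :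
    ∀ T : Finset Ω, T.card ≤ k →
      (1 - (1 - 1 / (k : ℝ)) ^ k) * f T ≤ f (S k) ∧
      (1 - 1 / Real.exp 1) * f T ≤ (1 - (1 - 1 / (k : ℝ)) ^ k) * f T := by
  intro T hT
  have hT0 : 0 ≤ f T := hempty ▸ hmono ∅ T (empty_subset T)
  have hratio : 0 ≤ 1 - 1 / (k : ℝ) :=
    sub_nonneg.2 (div_le_one_of_le₀ (by exact_mod_cast hk) k.cast_nonneg)
  have hstep : ∀ i, f T - f (S (i + 1)) ≤ (1 - 1 / (k : ℝ)) * (f T - f (S i)) := fun i => by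
    obtain ⟨x, hSx, hx⟩ := hgreedy i
    rw [hSx]
    exact greedy_gap_le_one_sub_inv_mul hmono hsub hx hk hT
  have hgap : f T - f (S k) ≤ (1 - 1 / (k : ℝ)) ^ k * f T := by
    simpa [hS0, hempty] using le_geom (u := fun i => f T - f (S i)) hratio k fun i _ => hstep i
  have hexp : (1 - 1 / (k : ℝ)) ^ k ≤ 1 / Real.exp 1 := by
    simpa [Real.exp_neg] using
      Real.one_sub_div_pow_le_exp_neg (n := k) (t := 1) (by exact_mod_cast hk)
  exact ⟨by linarith, by gcongr⟩
end

section
/- The key greedy recursion: if f is monotone submodular with f(∅) = 0, OPT is an optimal set of size at most k, and S_i is the greedy set after i steps, then max_x [f(S_i ∪ {x}) − f(S_i)] ≥ (f(OPT) − f(S_i))/k, and consequently f(OPT) − f(S_{i+1}) ≤ (1 − 1/k)(f(OPT) − f(S_i)). -/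
theorem greedy_recursion {Ω : Type*} [DecidableEq Ω] [Nonempty Ω]
    (f : Finset Ω → ℝ)
    (hmono : ∀ A B : Finset Ω, A ⊆ B → f A ≤ f B)
    (hsub : ∀ (A B : Finset Ω) (x : Ω), A ⊆ B → x ∉ B →
      f (insert x B) - f B ≤ f (insert x A) - f A)
    (hempty : f ∅ = 0)
    (k : ℕ) (hk : 1 ≤ k)
    (OPT : Finset Ω) (hcard : OPT.card ≤ k)
    (S : Finset Ω) :
    (∃ x : Ω, (f OPT - f S) / (k : ℝ) ≤ f (insert x S) - f S) ∧
    (∀ x : Ω, (∀ y : Ω, f (insert y S) - f S ≤ f (insert x S) - f S) →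
      f OPT - f (insert x S) ≤ (1 - 1 / (k : ℝ)) * (f OPT - f S)) := by
  have hkpos : (0:ℝ) < k := by exact_mod_cast hk
  have hmarg : ∀ x : Ω, 0 ≤ f (insert x S) - f S := by
    intro x
    have := hmono S (insert x S) (Finset.subset_insert x S)
    linarith
  -- key: f (S ∪ T) - f S ≤ ∑ x in T, marginal x
  have key : ∀ T : Finset Ω, f (S ∪ T) - f S ≤ ∑ x ∈ T, (f (insert x S) - f S) := by
    intro T
    induction T using Finset.induction_on with
    | empty => simp
    | @insert a T ha ih =>
      rw [Finset.sum_insert ha, Finset.union_insert]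
      by_cases haST : a ∈ S ∪ T
      · rw [Finset.insert_eq_self.mpr haST]
        have := hmarg a
        linarith
      · have h1 := hsub S (S ∪ T) a (Finset.subset_union_left) haST
        linarith
  have main : ∃ x : Ω, (f OPT - f S) / (k : ℝ) ≤ f (insert x S) - f S := by
    by_cases hle : f OPT - f S ≤ 0
    · obtain ⟨x⟩ := ‹Nonempty Ω›
      exact ⟨x, le_trans (div_nonpos_of_nonpos_of_nonneg hle hkpos.le) (hmarg x)⟩
    · push_neg at hle
      have hOPTne : OPT.Nonempty := by
        rcases OPT.eq_empty_or_nonempty with h | h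
        · exfalso
          have : f ∅ ≤ f S := hmono ∅ S (Finset.empty_subset S)
          rw [h] at hle; linarith
        · exact h
      have h1 : f OPT - f S ≤ ∑ x ∈ OPT, (f (insert x S) - f S) := by
        have h2 : f OPT ≤ f (S ∪ OPT) := hmono _ _ Finset.subset_union_right
        have := key OPT
        linarith
      have h3 : ∑ _x ∈ OPT, (f OPT - f S) / (k : ℝ) ≤ ∑ x ∈ OPT, (f (insert x S) - f S) := by
        rw [Finset.sum_const, nsmul_eq_mul]
        refine le_trans ?_ h1
        rw [mul_comm, div_mul_eq_mul_div, div_le_iff₀ hkpos]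
        nlinarith [(show (OPT.card : ℝ) ≤ k by exact_mod_cast hcard)]
      obtain ⟨x, _, hx⟩ := Finset.exists_le_of_sum_le hOPTne h3
      exact ⟨x, hx⟩
  refine ⟨main, ?_⟩
  intro x hx
  obtain ⟨x0, hx0⟩ := main
  have := hx x0
  have hins : (f OPT - f S) / (k : ℝ) ≤ f (insert x S) - f S := le_trans hx0 this
  rw [div_le_iff₀ hkpos] at hins
  have h1k : 1 - 1 / (k:ℝ) = (k - 1) / k := by field_simp
  rw [h1k, div_mul_eq_mul_div, le_div_iff₀ hkpos]
  nlinarith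
end
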